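/- arXiv:2211.08998 — 7 statements merged into one kernel-verified Lean document; each statement's English description precedes it below -/
import Mathlib

section
/- For the two-state readmission MDP with horizon H, terminal value V_{H+1}=0, costs c_a, c_R ≥ 0, and probabilities p_{h,a} ∈ [0,1] with p_{h,0} ≥ p_{h,1}, the value function defined by V_h = min{c_a + p_{h,1} c_R + (1 - p_{h,1}) V_{h+1}, p_{h,0} c_R + (1 - p_{h,0}) V_{h+1}} satisfies V_h ≥ (1 - ∏_{i=h}^{H} (1 - p_{i,1})) c_R for all 1 ≤ h ≤ H. -/
/-- Lower bound on the value function of the two-state readmission MDP: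
`V h ≥ (1 - ∏_{i=h}^H (1 - p_{i,1})) c_R` for all `1 ≤ h ≤ H`. -/
theorem stmt_1 (H : ℕ) (cR ca : ℝ) (hcR : 0 ≤ cR) (hca : 0 ≤ ca)
    (p0 p1 V : ℕ → ℝ)
    (hp0 : ∀ h, 0 ≤ p0 h ∧ p0 h ≤ 1) (hp1 : ∀ h, 0 ≤ p1 h ∧ p1 h ≤ 1)
    (hle : ∀ h, p1 h ≤ p0 h)
    (hVend : V (H + 1) = 0)
    (hVle : ∀ h, 1 ≤ h → h ≤ H → V (h + 1) ≤ cR)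
    (hbell : ∀ h, 1 ≤ h → h ≤ H →
      V h = min (ca + p1 h * cR + (1 - p1 h) * V (h + 1))
                (p0 h * cR + (1 - p0 h) * V (h + 1))) :
    ∀ h, 1 ≤ h → h ≤ H →
      (1 - ∏ i ∈ Finset.Icc h H, (1 - p1 i)) * cR ≤ V h := by
  have key : ∀ d h, h + d = H + 1 → 1 ≤ h →
      (1 - ∏ i ∈ Finset.Icc h H, (1 - p1 i)) * cR ≤ V h := by
    intro d
    induction d with
    | zero =>
      intro h hd _
      have : h = H + 1 := by omega
      subst this
      simp [hVend, Finset.Icc_eq_empty (by omega : ¬ H + 1 ≤ H)]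
    | succ d ih =>
      intro h hd h1
      have hH : h ≤ H := by omega
      have ihh := ih (h + 1) (by omega) (by omega)
      set Q := ∏ i ∈ Finset.Icc (h + 1) H, (1 - p1 i) with hQ
      have hprod : ∏ i ∈ Finset.Icc h H, (1 - p1 i) = (1 - p1 h) * Q := by
        rw [hQ, ← Finset.Ico_add_one_right_eq_Icc, ← Finset.Ico_add_one_right_eq_Icc,
          Finset.prod_eq_prod_Ico_succ_bot (by omega)]
      have hQ0 : 0 ≤ Q :=
        Finset.prod_nonneg fun i _ => by linarith [(hp1 i).2]
      have hQ1 : Q ≤ 1 :=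
        Finset.prod_le_one (fun i _ => by linarith [(hp1 i).2])
          (fun i _ => by linarith [(hp1 i).1])
      have hV' : V (h + 1) ≤ cR := hVle h h1 hH
      obtain ⟨hp1l, hp1u⟩ := hp1 h
      obtain ⟨hp0l, hp0u⟩ := hp0 h
      have hlh := hle h
      rw [hbell h h1 hH, hprod]
      refine le_min ?_ ?_
      · nlinarith [mul_nonneg hp1l hQ0, mul_nonneg (mul_nonneg hp1l hQ0) hcR,
          mul_le_mul_of_nonneg_left ihh (by linarith : (0:ℝ) ≤ 1 - p1 h)]
      · nlinarith [mul_nonneg hQ0 hcR,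
          mul_le_mul_of_nonneg_left ihh (by linarith : (0:ℝ) ≤ 1 - p1 h),
          mul_le_mul_of_nonneg_right (hle h) (by linarith : (0:ℝ) ≤ cR - V (h+1))]
  intro h h1 hH
  exact key (H + 1 - h) h (by omega) h1
end

section
/- In the two-state readmission MDP, suppose for epochs 1 ≤ h ≤ h_c the readmission probabilities p_{h,a} are nondecreasing in h for each fixed a ∈ {0,1}, and for all 1 ≤ h ≤ h_c − 1 the relative treatment effects satisfy Δ_h/p_{h,0} − Δ_{h+1}/p_{h+1,0} < β / ∏_{i=h+1}^{H}(1 − p_{i,1}), where Δ_h = p_{h,0} − p_{h,1} ≥ 0 and β = c_a/c_R. Then there is no epoch 1 ≤ h ≤ h_c − 1 with a*_h = 1 and a*_{h+1} = 0, where a*_h is the optimal action characterized by a*_h = 1 if and only if Δ_h > β/(1 − V_{h+1}/c_R). Consequently the optimal policy on {1,...,h_c} has the form a*_1 = ... = a*_{h_0−1} = 0, a*_{h_0} = ... = a*_{h_c} = 1 for some h_0. -/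
set_option maxHeartbeats 1000000 in
/-- Temporal pattern of the optimal policy on the increasing-risk phase `{1, ..., h_c}`:
no epoch `h ≤ h_c - 1` has `a*_h = 1` and `a*_{h+1} = 0`; consequently the optimal
actions on `{1, ..., h_c}` are `0, ..., 0, 1, ..., 1`. -/
theorem stmt_2 (H hc : ℕ) (ca cR : ℝ) (hca : 0 < ca) (hcR : 0 < cR)
    (p0 p1 V : ℕ → ℝ) (β : ℝ) (hβ : β = ca / cR)
    (Δ : ℕ → ℝ) (hΔdef : ∀ h, Δ h = p0 h - p1 h)
    (hp0 : ∀ h, 0 ≤ p0 h ∧ p0 h < 1) (hp1 : ∀ h, 0 ≤ p1 h ∧ p1 h < 1)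
    (hΔnn : ∀ h, 0 ≤ Δ h)
    (hp0pos : ∀ h, 1 ≤ h → h ≤ H → 0 < p0 h)
    (h1c : 1 ≤ hc) (hhcH : hc ≤ H)
    (hVend : V (H + 1) = 0)
    (hbell : ∀ h, 1 ≤ h → h ≤ H →
      V h = min (ca + p1 h * (cR - V (h + 1)) + V (h + 1))
                (p0 h * (cR - V (h + 1)) + V (h + 1)))
    (aStar : ℕ → Prop)
    (haStar : ∀ h, 1 ≤ h → h ≤ H → (aStar h ↔ Δ h > β / (1 - V (h + 1) / cR)))
    -- (a): monotone non-decreasing risk on {1, ..., h_c}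
    (hmono0 : ∀ h, 1 ≤ h → h + 1 ≤ hc → p0 h ≤ p0 (h + 1))
    (hmono1 : ∀ h, 1 ≤ h → h + 1 ≤ hc → p1 h ≤ p1 (h + 1))
    -- (b): condition on relative treatment effects
    (hcond : ∀ h, 1 ≤ h → h + 1 ≤ hc →
      Δ h / p0 h - Δ (h + 1) / p0 (h + 1) <
        β / ∏ i ∈ Finset.Icc (h + 1) H, (1 - p1 i)) :
    (¬ ∃ h, 1 ≤ h ∧ h + 1 ≤ hc ∧ aStar h ∧ ¬ aStar (h + 1)) ∧
    ∃ h0, ∀ h, 1 ≤ h → h ≤ hc → (aStar h ↔ h0 ≤ h) := by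
  have hcR0 : cR ≠ 0 := ne_of_gt hcR
  have hprod0 : ∀ a b : ℕ, 0 < ∏ i ∈ Finset.Icc a b, (1 - p0 i) :=
    fun a b => Finset.prod_pos (fun i _ => by linarith [(hp0 i).2])
  have hprod1 : ∀ a b : ℕ, 0 < ∏ i ∈ Finset.Icc a b, (1 - p1 i) :=
    fun a b => Finset.prod_pos (fun i _ => by linarith [(hp1 i).2])
  -- value function bounds
  have hbound : ∀ n h, 1 ≤ h → h + n = H + 1 →
      cR * ∏ i ∈ Finset.Icc h H, (1 - p0 i) ≤ cR - V h ∧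
      cR - V h ≤ cR * ∏ i ∈ Finset.Icc h H, (1 - p1 i) := by
    intro n
    induction n with
    | zero =>
      intro h h1 hn
      have hh : h = H + 1 := by omega
      subst hh
      have he : Finset.Icc (H+1) H = ∅ := Finset.Icc_eq_empty (by omega)
      rw [hVend, he]
      simp only [Finset.prod_empty]
      constructor <;> linarith
    | succ n ih =>
      intro h h1 hn
      have hhH : h ≤ H := by omega
      obtain ⟨ih1, ih2⟩ := ih (h+1) (by omega) (by omega)
      have hU'pos : 0 < cR - V (h+1) :=
        lt_of_lt_of_le (mul_pos hcR (hprod0 (h+1) H)) ih1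
      have hins : Finset.Icc h H = insert h (Finset.Icc (h+1) H) := by
        ext x; simp only [Finset.mem_Icc, Finset.mem_insert]; omega
      have hnotin : h ∉ Finset.Icc (h+1) H := by simp
      have hVh := hbell h h1 hhH
      have hminA : V h ≤ p0 h * (cR - V (h+1)) + V (h+1) := by
        rw [hVh]; exact min_le_right _ _
      have hd : 0 ≤ p0 h - p1 h := by have := hΔnn h; rw [hΔdef h] at this; linarith
      have hminB : p1 h * (cR - V (h+1)) + V (h+1) ≤ V h := by
        rw [hVh]
        apply le_min
        · linarith
        · nlinarith
      constructor
      · rw [hins, Finset.prod_insert hnotin]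
        have h0a := (hp0 h).1
        have h0b := (hp0 h).2
        nlinarith [hprod0 (h+1) H]
      · rw [hins, Finset.prod_insert hnotin]
        have h1a := (hp1 h).1
        have h1b := (hp1 h).2
        nlinarith [hprod1 (h+1) H]
  have hUpos : ∀ h, 1 ≤ h → h ≤ H + 1 → 0 < cR - V h := by
    intro h h1 h2
    exact lt_of_lt_of_le (mul_pos hcR (hprod0 h H)) (hbound (H + 1 - h) h h1 (by omega)).1
  -- reformulation of aStar
  have hA : ∀ h, 1 ≤ h → h ≤ H → (aStar h ↔ ca < Δ h * (cR - V (h+1))) := by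
    intro h h1 h2
    have hU := hUpos (h+1) (by omega) (by omega)
    rw [haStar h h1 h2]
    have he1 : 1 - V (h+1) / cR = (cR - V (h+1)) / cR := by field_simp
    have heq : β / (1 - V (h+1) / cR) = ca / (cR - V (h+1)) := by
      rw [hβ, he1, div_div_div_comm, div_self hcR0, div_one]
    rw [heq, gt_iff_lt, div_lt_iff₀ hU]
  -- if action 0 is optimal, the value recursion contracts by (1 - p0 h)
  have hstep : ∀ h, 1 ≤ h → h ≤ H → ¬ aStar h →
      cR - V h = (1 - p0 h) * (cR - V (h+1)) := by
    intro h h1 h2 hna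
    have hle : Δ h * (cR - V (h+1)) ≤ ca := by
      by_contra hlt
      exact hna ((hA h h1 h2).2 (lt_of_not_ge hlt))
    rw [hΔdef h] at hle
    have hVh := hbell h h1 h2
    have hmin : min (ca + p1 h * (cR - V (h + 1)) + V (h + 1))
        (p0 h * (cR - V (h + 1)) + V (h + 1))
        = p0 h * (cR - V (h + 1)) + V (h + 1) :=
      min_eq_right (by nlinarith)
    rw [hVh, hmin]; ring
  -- no drop from 1 to 0
  have hnodrop : ∀ h, 1 ≤ h → h + 1 ≤ hc → aStar h → aStar (h + 1) := by
    intro h h1 hhc hah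
    by_contra hna
    have hhH : h ≤ H := by omega
    have hh1H : h + 1 ≤ H := by omega
    have hU2 : 0 < cR - V (h + 2) := hUpos (h+2) (by omega) (by omega)
    have hstep1 : cR - V (h+1) = (1 - p0 (h+1)) * (cR - V (h+2)) :=
      hstep (h+1) (by omega) hh1H hna
    have h1' : ca < Δ h * (cR - V (h+1)) := (hA h h1 hhH).1 hah
    rw [hstep1] at h1'
    have h2' : Δ (h+1) * (cR - V (h+2)) ≤ ca := by
      by_contra hlt
      exact hna ((hA (h+1) (by omega) hh1H).2 (lt_of_not_ge hlt))
    set a := p0 h with ha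
    set b := p0 (h+1) with hb
    set U2 := cR - V (h+2) with hU2def
    have hapos : 0 < a := hp0pos h h1 hhH
    have hbpos : 0 < b := hp0pos (h+1) (by omega) hh1H
    have hab : a ≤ b := hmono0 h h1 hhc
    have hq : 0 < 1 - b := by have := (hp0 (h+1)).2; linarith
    have hq1 : 0 < 1 - p1 (h+1) := by have := (hp1 (h+1)).2; linarith
    have hqq1 : 1 - b ≤ 1 - p1 (h+1) := by
      have := hΔnn (h+1); rw [hΔdef] at this; linarith
    have hins : Finset.Icc (h+1) H = insert (h+1) (Finset.Icc (h+2) H) := by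
      ext x; simp only [Finset.mem_Icc, Finset.mem_insert]; omega
    have hnotin : (h+1) ∉ Finset.Icc (h+2) H := by simp
    set P2 := ∏ i ∈ Finset.Icc (h+2) H, (1 - p1 i) with hP2
    have hP2pos : 0 < P2 := hprod1 (h+2) H
    have hPsplit : (∏ i ∈ Finset.Icc (h+1) H, (1 - p1 i)) = (1 - p1 (h+1)) * P2 := by
      rw [hins, Finset.prod_insert hnotin]
    have hU2b : U2 ≤ cR * P2 := (hbound (H + 1 - (h+2)) (h+2) (by omega) (by omega)).2
    have hc' := hcond h h1 hhc
    rw [hPsplit, hβ, div_div] at hc'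
    -- chain of inequalities
    have pq1U2 : 0 < (1 - p1 (h+1)) * U2 := mul_pos hq1 hU2
    have pqU2 : 0 < (1 - b) * U2 := mul_pos hq hU2
    have paqU2 : 0 < a * ((1 - b) * U2) := mul_pos hapos pqU2
    have pbU2 : 0 < b * U2 := mul_pos hbpos hU2
    have T1 : ca / (cR * ((1 - p1 (h+1)) * P2)) ≤ ca / ((1 - p1 (h+1)) * U2) := by
      apply div_le_div_of_nonneg_left hca.le pq1U2
      nlinarith
    have T2 : ca / ((1 - p1 (h+1)) * U2) ≤ ca / ((1 - b) * U2) := by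
      apply div_le_div_of_nonneg_left hca.le pqU2
      nlinarith
    have e6 : ca / (a * ((1 - b) * U2)) < Δ h / a := by
      rw [div_lt_div_iff₀ paqU2 hapos]
      nlinarith [mul_lt_mul_of_pos_right h1' hapos]
    have e7 : Δ (h+1) / b ≤ ca / (b * U2) := by
      rw [div_le_div_iff₀ hbpos pbU2]
      nlinarith [mul_le_mul_of_nonneg_right h2' hbpos.le]
    have e8 : ca / ((1 - b) * U2) ≤ ca / (a * ((1 - b) * U2)) - ca / (b * U2) := by
      rw [div_sub_div _ _ (ne_of_gt paqU2) (ne_of_gt pbU2),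
        div_le_div_iff₀ pqU2 (mul_pos paqU2 pbU2)]
      nlinarith [mul_nonneg (mul_nonneg (mul_nonneg (sub_nonneg.2 hab) hca.le) hq.le)
        (mul_pos hU2 hU2).le]
    linarith
  -- chain upward
  have hchain : ∀ h k, 1 ≤ h → h ≤ k → k ≤ hc → aStar h → aStar k := by
    intro h k h1 hk
    induction k, hk using Nat.le_induction with
    | base => intro _ hah; exact hah
    | succ k hk ih =>
      intro hkc hah
      exact hnodrop k (le_trans h1 hk) hkc (ih (by omega) hah)
  constructor
  · rintro ⟨h, h1, hhc, hah, hnah⟩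
    exact hnah (hnodrop h h1 hhc hah)
  · classical
    by_cases hex : ∃ h, 1 ≤ h ∧ h ≤ hc ∧ aStar h
    · refine ⟨Nat.find hex, ?_⟩
      intro h h1 hhc
      constructor
      · intro hah; exact Nat.find_min' hex ⟨h1, hhc, hah⟩
      · intro hle
        obtain ⟨h01, h0c, hah0⟩ := Nat.find_spec hex
        exact hchain (Nat.find hex) h h01 hle hhc hah0
    · refine ⟨hc + 1, ?_⟩
      intro h h1 hhc
      constructor
      · intro hah; exact absurd ⟨h, h1, hhc, hah⟩ hex
      · intro hle; exact absurd hle (by omega)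
end

section
/- In the two-state readmission MDP, suppose for epochs h_c ≤ h ≤ H the readmission probabilities p_{h,a} are nonincreasing in h for each fixed a ∈ {0,1}, and for all h_c ≤ h ≤ H − 1 the relative treatment effects satisfy Δ_h/p_{h,0} − Δ_{h+1}/p_{h+1,0} > β / ∏_{i=h+1}^{H}(1 − p_{i,0}). Then there is no epoch h_c ≤ h ≤ H − 1 with a*_h = 0 and a*_{h+1} = 1; consequently the optimal policy on {h_c,...,H} has the form a*_{h_c} = ... = a*_{h_1−1} = 1, a*_{h_1} = ... = a*_H = 0 for some h_1. -/
/-- Temporal pattern of the optimal policy on the decreasing-risk phase `{h_c, ..., H}`: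
no epoch `h_c ≤ h ≤ H - 1` has `a*_h = 0` and `a*_{h+1} = 1`; consequently the optimal
actions on `{h_c, ..., H}` are `1, ..., 1, 0, ..., 0`. -/
theorem stmt_3 (H hc : ℕ) (ca cR : ℝ) (hca : 0 < ca) (hcR : 0 < cR)
    (p0 p1 V : ℕ → ℝ) (β : ℝ) (hβ : β = ca / cR)
    (Δ : ℕ → ℝ) (hΔdef : ∀ h, Δ h = p0 h - p1 h)
    (hp0 : ∀ h, 0 ≤ p0 h ∧ p0 h < 1) (hp1 : ∀ h, 0 ≤ p1 h ∧ p1 h < 1)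
    (hΔnn : ∀ h, 0 ≤ Δ h)
    (hp0pos : ∀ h, 1 ≤ h → h ≤ H → 0 < p0 h)
    (h1c : 1 ≤ hc) (hhcH : hc ≤ H)
    (hVend : V (H + 1) = 0)
    (hbell : ∀ h, 1 ≤ h → h ≤ H →
      V h = min (ca + p1 h * (cR - V (h + 1)) + V (h + 1))
                (p0 h * (cR - V (h + 1)) + V (h + 1)))
    (aStar : ℕ → Prop)
    (haStar : ∀ h, 1 ≤ h → h ≤ H → (aStar h ↔ Δ h > β / (1 - V (h + 1) / cR)))
    -- (a): monotone non-increasing risk on {h_c, ..., H}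
    (hmono0 : ∀ h, hc ≤ h → h + 1 ≤ H → p0 (h + 1) ≤ p0 h)
    (hmono1 : ∀ h, hc ≤ h → h + 1 ≤ H → p1 (h + 1) ≤ p1 h)
    -- (b): condition on relative treatment effects
    (hcond : ∀ h, hc ≤ h → h + 1 ≤ H →
      Δ h / p0 h - Δ (h + 1) / p0 (h + 1) >
        β / ∏ i ∈ Finset.Icc (h + 1) H, (1 - p0 i)) :
    (¬ ∃ h, hc ≤ h ∧ h + 1 ≤ H ∧ ¬ aStar h ∧ aStar (h + 1)) ∧
    ∃ h1, ∀ h, hc ≤ h → h ≤ H → (aStar h ↔ h < h1) := by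
  classical
  set W : ℕ → ℝ := fun h => 1 - V h / cR with hWdef
  set P : ℕ → ℝ := fun h => ∏ i ∈ Finset.Icc h H, (1 - p0 i) with hPdef
  have hcR' : cR ≠ 0 := ne_of_gt hcR
  have hβpos : 0 < β := by rw [hβ]; positivity
  have hPpos : ∀ h, 0 < P h := by
    intro h
    exact Finset.prod_pos fun i _ => by linarith [(hp0 i).2]
  have hPstep : ∀ h, h ≤ H → P h = (1 - p0 h) * P (h + 1) := by
    intro h hh
    simp only [hPdef]
    rw [Finset.Icc_add_one_left_eq_Ioc, ← Finset.Ioc_insert_left hh,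
      Finset.prod_insert Finset.left_notMem_Ioc]
  have hWstep : ∀ h, 1 ≤ h → h ≤ H →
      W h = W (h + 1) - min (β + p1 h * W (h + 1)) (p0 h * W (h + 1)) := by
    intro h h1 hH
    have hb := hbell h h1 hH
    have e1 : cR - V (h + 1) = cR * W (h + 1) := by
      simp only [hWdef]; field_simp
    have e2 : ca = cR * β := by rw [hβ]; field_simp
    have harg1 : cR * β + p1 h * (cR * W (h + 1)) = cR * (β + p1 h * W (h + 1)) := by ring
    have harg2 : p0 h * (cR * W (h + 1)) = cR * (p0 h * W (h + 1)) := by ring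
    have e3 : V h = V (h + 1) + cR * min (β + p1 h * W (h + 1)) (p0 h * W (h + 1)) := by
      rw [hb, e1, e2, harg1, harg2, min_add_add_right,
        ← mul_min_of_nonneg _ _ (le_of_lt hcR), add_comm]
    generalize min (β + p1 h * W (h + 1)) (p0 h * W (h + 1)) = m at e3 ⊢
    simp only [hWdef]
    rw [e3]
    field_simp
    ring
  have key : ∀ k h, 1 ≤ h → h + k = H + 1 → P h ≤ W h ∧ W h ≤ 1 := by
    intro k
    induction k with
    | zero =>
      intro h h1 he
      have : h = H + 1 := by omega
      subst this
      have hP : P (H + 1) = 1 := by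
        simp only [hPdef]
        rw [Finset.Icc_eq_empty (by omega), Finset.prod_empty]
      have hW1 : W (H + 1) = 1 := by simp [hWdef, hVend]
      simp [hP, hW1]
    | succ k ih =>
      intro h h1 he
      have hH : h ≤ H := by omega
      obtain ⟨ihl, ihu⟩ := ih (h + 1) (by omega) (by omega)
      have hw := hWstep h h1 hH
      have hWp : 0 < W (h + 1) := lt_of_lt_of_le (hPpos _) ihl
      have hmin1 : min (β + p1 h * W (h + 1)) (p0 h * W (h + 1)) ≤ p0 h * W (h + 1) :=
        min_le_right _ _
      have hmin0 : 0 ≤ min (β + p1 h * W (h + 1)) (p0 h * W (h + 1)) := by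
        apply le_min
        · nlinarith [(hp1 h).1]
        · nlinarith [(hp0 h).1]
      constructor
      · rw [hPstep h hH, hw]
        nlinarith [(hp0 h).1, (hp0 h).2, hPpos (h + 1)]
      · rw [hw]; linarith
  have hWbnd : ∀ h, h ≤ H → P (h + 1) ≤ W (h + 1) ∧ W (h + 1) ≤ 1 :=
    fun h hh => key (H - h) (h + 1) (by omega) (by omega)
  have hWpos : ∀ h, h ≤ H → 0 < W (h + 1) :=
    fun h hh => lt_of_lt_of_le (hPpos _) (hWbnd h hh).1
  have haStar' : ∀ h, 1 ≤ h → h ≤ H → (aStar h ↔ β < Δ h * W (h + 1)) := by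
    intro h h1 hH
    rw [haStar h h1 hH]
    have hw : 0 < W (h + 1) := hWpos h hH
    exact div_lt_iff₀ hw
  have noswitch : ∀ h, hc ≤ h → h + 1 ≤ H → aStar (h + 1) → aStar h := by
    intro h hch hH1 ha1
    by_contra hna
    have h1 : 1 ≤ h := le_trans h1c hch
    have hH : h ≤ H := by omega
    have hw1pos : 0 < W (h + 1) := hWpos h hH
    have hw2pos : 0 < W (h + 1 + 1) := hWpos (h + 1) hH1
    have hPp : 0 < P (h + 1 + 1) := hPpos (h + 1 + 1)
    have hw2le : P (h + 1 + 1) ≤ W (h + 1 + 1) := (hWbnd (h + 1) hH1).1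
    have ha' : β < Δ (h + 1) * W (h + 1 + 1) := (haStar' (h + 1) (by omega) hH1).mp ha1
    have hna' : Δ h * W (h + 1) ≤ β := by
      by_contra hx
      exact hna ((haStar' h h1 hH).mpr (lt_of_not_ge hx))
    have hp01 : 0 ≤ p0 (h + 1) ∧ p0 (h + 1) < 1 := hp0 (h + 1)
    have hw12 : (1 - p0 (h + 1)) * W (h + 1 + 1) ≤ W (h + 1) := by
      have hs := hWstep (h + 1) (by omega) hH1
      have hmin : min (β + p1 (h + 1) * W (h + 1 + 1)) (p0 (h + 1) * W (h + 1 + 1)) ≤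
          p0 (h + 1) * W (h + 1 + 1) := min_le_right _ _
      rw [hs]
      nlinarith
    have hp0h : 0 < p0 h := hp0pos h h1 hH
    have hp0h1 : 0 < p0 (h + 1) := hp0pos (h + 1) (by omega) hH1
    have hle : p0 (h + 1) ≤ p0 h := hmono0 h hch hH1
    have hc' := hcond h hch hH1
    have hP1pos : (0:ℝ) < (1 - p0 (h + 1)) * P (h + 1 + 1) := by nlinarith
    have hc2 : β / ((1 - p0 (h + 1)) * P (h + 1 + 1)) < Δ h / p0 h - Δ (h + 1) / p0 (h + 1) := by
      rw [← hPstep (h + 1) hH1]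
      exact hc'
    rw [div_sub_div _ _ (ne_of_gt hp0h) (ne_of_gt hp0h1),
      div_lt_div_iff₀ hP1pos (by positivity)] at hc2
    -- hc2 : β * (p0 h * p0 (h+1)) < (Δ h * p0 (h+1) - Δ (h+1) * p0 h) * ((1 - p0 (h+1)) * P (h+2))
    have hF1 : Δ h * ((1 - p0 (h + 1)) * W (h + 1 + 1)) ≤ β :=
      le_trans (mul_le_mul_of_nonneg_left hw12 (hΔnn h)) hna'
    have hA : Δ h * ((1 - p0 (h + 1)) * W (h + 1 + 1)) * (p0 (h + 1) * P (h + 1 + 1)) ≤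
        β * (p0 (h + 1) * P (h + 1 + 1)) :=
      mul_le_mul_of_nonneg_right hF1 (by positivity)
    have hB : β * (p0 h * ((1 - p0 (h + 1)) * P (h + 1 + 1))) ≤
        Δ (h + 1) * W (h + 1 + 1) * (p0 h * ((1 - p0 (h + 1)) * P (h + 1 + 1))) :=
      mul_le_mul_of_nonneg_right (le_of_lt ha') (by positivity)
    have hC : β * (p0 h * p0 (h + 1)) * W (h + 1 + 1) <
        (Δ h * p0 (h + 1) - p0 h * Δ (h + 1)) * ((1 - p0 (h + 1)) * P (h + 1 + 1)) *
          W (h + 1 + 1) :=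
      mul_lt_mul_of_pos_right hc2 hw2pos
    have hD : β * P (h + 1 + 1) * (p0 (h + 1) - p0 h) ≤ 0 := by
      nlinarith [mul_nonneg (mul_nonneg hβpos.le hPp.le) (sub_nonneg.mpr hle)]
    have hE : β * P (h + 1 + 1) * (p0 h * p0 (h + 1)) ≤
        β * W (h + 1 + 1) * (p0 h * p0 (h + 1)) :=
      mul_le_mul_of_nonneg_right (mul_le_mul_of_nonneg_left hw2le hβpos.le)
        (mul_nonneg hp0h.le hp0h1.le)
    ring_nf at hA hB hC hD hE
    linarith [hA, hB, hC, hD, hE]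
  refine ⟨fun ⟨h, hch, hH, hna, ha⟩ => hna (noswitch h hch hH ha), ?_⟩
  have mono : ∀ h h', hc ≤ h → h ≤ h' → h' ≤ H → aStar h' → aStar h := by
    intro h h' hch hhh' hH' ha'
    induction h', hhh' using Nat.le_induction with
    | base => exact ha'
    | succ k hk ih =>
      exact ih (by omega) (noswitch k (le_trans hch hk) hH' ha')
  by_cases hall : ∀ h, hc ≤ h → h ≤ H → aStar h
  · refine ⟨H + 1, fun h hh hH => ?_⟩
    simp only [Nat.lt_succ_iff]
    exact ⟨fun _ => hH, fun _ => hall h hh hH⟩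
  · push_neg at hall
    obtain ⟨h0, hh0c, hh0H, hh0⟩ := hall
    have hex : ∃ h, hc ≤ h ∧ h ≤ H ∧ ¬ aStar h := ⟨h0, hh0c, hh0H, hh0⟩
    refine ⟨Nat.find hex, fun h hh hH => ?_⟩
    obtain ⟨hfc, hfH, hfna⟩ := Nat.find_spec hex
    constructor
    · intro ha
      by_contra hlt
      push_neg at hlt
      exact hfna (mono (Nat.find hex) h hfc hlt hH ha)
    · intro hlt
      by_contra hna
      exact Nat.find_min hex hlt ⟨hh, hH, hna⟩
end

section
/- Fix n, N ≥ 1, Δ > 0, and L = log(2HSAT/δ) > 0. Define ε(λ) = sqrt(L(λ²/(2n) + (1−λ)²/(2N))) + Δ(1−λ). If n < L/(2Δ²), then the unique minimizer of ε over [0,1] is λ* = (n + NnΔ/sqrt((N+n)L/2 − Δ²Nn))/(N+n), and in particular 0 < λ* < 1 and ε(λ*) < ε(1) = sqrt(L/(2n)). -/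
/-!
Write `a = L/(2n)`, `b = L/(2N)` and `‖(x, y)‖ = √(a x² + b y²)`, so that
`ε(λ) = ‖(λ, 1 - λ)‖ + Δ (1 - λ)`. Lagrange's identity
`‖u‖² ‖v‖² = ⟨u, v⟩² + a b (u₁ v₂ - u₂ v₁)²` applied to `u = (λ, 1 - λ)`, `v = (μ, 1 - μ)`
gives the strict Cauchy–Schwarz inequality `⟨u, v⟩ < ‖u‖ ‖v‖` for `λ ≠ μ`. At a stationary
point `μ`, i.e. `a μ - b (1 - μ) = Δ ‖v‖`, one has `⟨u, v⟩ = ‖v‖² + Δ ‖v‖ (λ - μ)`, so dividing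
by `‖v‖` yields `ε(μ) < ε(λ)` for every `λ ≠ μ`. The explicit `λ*` is checked to be stationary,
with `‖(λ*, 1 - λ*)‖ = L / (2 √((N+n)L/2 − Δ²Nn))`.
-/

open Real

noncomputable def poolingRadius (a b Δ l : ℝ) : ℝ :=
  √(a * l ^ 2 + b * (1 - l) ^ 2) + Δ * (1 - l)

section PoolingRadius

variable {a b Δ l m : ℝ}

theorem weightedSq_pos (ha : 0 < a) (hb : 0 < b) (m : ℝ) : 0 < a * m ^ 2 + b * (1 - m) ^ 2 := by
  rcases eq_or_ne m 0 with rfl | hm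
  · simpa using hb
  · have : 0 < a * m ^ 2 := by positivity
    nlinarith [sq_nonneg (1 - m)]

theorem weightedInner_lt_sqrt_mul_sqrt (ha : 0 < a) (hb : 0 < b) (hne : l ≠ m) :
    a * l * m + b * (1 - l) * (1 - m) <
      √(a * l ^ 2 + b * (1 - l) ^ 2) * √(a * m ^ 2 + b * (1 - m) ^ 2) := by
  have lagrange : (a * l ^ 2 + b * (1 - l) ^ 2) * (a * m ^ 2 + b * (1 - m) ^ 2) =
      (a * l * m + b * (1 - l) * (1 - m)) ^ 2 + a * b * (l - m) ^ 2 := by ring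
  have hgap : 0 < a * b * (l - m) ^ 2 := by
    have : l - m ≠ 0 := sub_ne_zero.mpr hne
    positivity
  rw [← sqrt_mul (weightedSq_pos ha hb l).le, lagrange]
  calc a * l * m + b * (1 - l) * (1 - m)
      ≤ |a * l * m + b * (1 - l) * (1 - m)| := le_abs_self _
    _ = √((a * l * m + b * (1 - l) * (1 - m)) ^ 2) := (sqrt_sq_eq_abs _).symm
    _ < _ := sqrt_lt_sqrt (sq_nonneg _) (lt_add_of_pos_right _ hgap)

theorem poolingRadius_lt_of_stationary (ha : 0 < a) (hb : 0 < b)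
    (hm : a * m - b * (1 - m) = Δ * √(a * m ^ 2 + b * (1 - m) ^ 2)) (hne : l ≠ m) :
    poolingRadius a b Δ m < poolingRadius a b Δ l := by
  set r := √(a * m ^ 2 + b * (1 - m) ^ 2)
  have hr : 0 < r := sqrt_pos.mpr (weightedSq_pos ha hb m)
  have hr2 : r ^ 2 = a * m ^ 2 + b * (1 - m) ^ 2 := sq_sqrt (weightedSq_pos ha hb m).le
  have hinner : a * l * m + b * (1 - l) * (1 - m) = r ^ 2 + Δ * r * (l - m) := by
    linear_combination (-1) * hr2 + (l - m) * hm
  have hcs := weightedInner_lt_sqrt_mul_sqrt ha hb hne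
  unfold poolingRadius
  nlinarith

theorem poolingRadius_le_of_stationary (ha : 0 < a) (hb : 0 < b)
    (hm : a * m - b * (1 - m) = Δ * √(a * m ^ 2 + b * (1 - m) ^ 2)) (l : ℝ) :
    poolingRadius a b Δ m ≤ poolingRadius a b Δ l := by
  rcases eq_or_ne l m with rfl | hne
  · exact le_rfl
  · exact (poolingRadius_lt_of_stationary ha hb hm hne).le

theorem eq_of_poolingRadius_eq_of_stationary (ha : 0 < a) (hb : 0 < b)
    (hm : a * m - b * (1 - m) = Δ * √(a * m ^ 2 + b * (1 - m) ^ 2))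
    (heq : poolingRadius a b Δ l = poolingRadius a b Δ m) : l = m := by
  by_contra hne
  exact (poolingRadius_lt_of_stationary ha hb hm hne).ne' heq

theorem poolingRadius_one (a b Δ : ℝ) : poolingRadius a b Δ 1 = √a := by
  simp [poolingRadius]

end PoolingRadius

section OptimalWeight

variable {n N L Δ s : ℝ}

theorem optimalWeight_mem_Ioo (hn : 0 < n) (hN : 0 < N) (hΔ : 0 ≤ Δ) (hs : n * Δ < s) :
    0 < (n + N * n * Δ / s) / (N + n) ∧ (n + N * n * Δ / s) / (N + n) < 1 := by
  have hs0 : 0 < s := by nlinarith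
  have hM : 0 < N + n := by linarith
  have hshift : N * n * Δ / s < N := by
    rw [div_lt_iff₀ hs0]
    nlinarith
  refine ⟨by positivity, ?_⟩
  rw [div_lt_one hM]
  linarith

theorem optimalWeight_stationary (hn : 0 < n) (hN : 0 < N) (hL : 0 < L) (hs : 0 < s)
    (hs2 : s ^ 2 = (N + n) * L / 2 - Δ ^ 2 * N * n) :
    let m := (n + N * n * Δ / s) / (N + n)
    L / (2 * n) * m - L / (2 * N) * (1 - m) =
      Δ * √(L / (2 * n) * m ^ 2 + L / (2 * N) * (1 - m) ^ 2) := by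
  intro m
  have hM : 0 < N + n := by linarith
  have hnorm : L / (2 * n) * m ^ 2 + L / (2 * N) * (1 - m) ^ 2 = (L / (2 * s)) ^ 2 := by
    simp only [m]
    field_simp
    linear_combination (2 * N * (N + n)) * hs2
  rw [hnorm, sqrt_sq (by positivity)]
  simp only [m]
  field_simp
  ring

end OptimalWeight

/-- The unique minimizer of the data-pooling radius
`ε(λ) = sqrt(L(λ²/(2n) + (1−λ)²/(2N))) + Δ(1−λ)` on `[0,1]` when `n < L/(2Δ²)` is
`λ* = (n + NnΔ/sqrt((N+n)L/2 − Δ²Nn))/(N+n)`, and `0 < λ* < 1`,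
`ε(λ*) < ε(1) = sqrt(L/(2n))`. -/
theorem stmt_8 (n N : ℕ) (hn : 1 ≤ n) (hN : 1 ≤ N) (Δ L : ℝ) (hΔ : 0 < Δ) (hL : 0 < L)
    (hsmall : (n : ℝ) < L / (2 * Δ ^ 2)) :
    letI ε : ℝ → ℝ := fun l =>
      Real.sqrt (L * (l ^ 2 / (2 * n) + (1 - l) ^ 2 / (2 * N))) + Δ * (1 - l)
    letI lstar : ℝ :=
      ((n : ℝ) + (N : ℝ) * n * Δ /
        Real.sqrt (((N : ℝ) + n) * L / 2 - Δ ^ 2 * N * n)) / ((N : ℝ) + n)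
    0 < lstar ∧ lstar < 1 ∧
    (∀ l ∈ Set.Icc (0 : ℝ) 1, ε lstar ≤ ε l) ∧
    (∀ l ∈ Set.Icc (0 : ℝ) 1, ε l = ε lstar → l = lstar) ∧
    ε 1 = Real.sqrt (L / (2 * n)) ∧ ε lstar < ε 1 := by
  have hn' : (0 : ℝ) < n := by exact_mod_cast hn
  have hN' : (0 : ℝ) < N := by exact_mod_cast hN
  have hsmall' : 2 * Δ ^ 2 * n < L := by rwa [lt_div_iff₀ (by positivity), mul_comm] at hsmall
  have hE : (n * Δ) ^ 2 < (N + n) * L / 2 - Δ ^ 2 * N * n := by nlinarith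
  have hs : (n : ℝ) * Δ < √((N + n) * L / 2 - Δ ^ 2 * N * n) :=
    lt_sqrt_of_sq_lt hE
  have hε : ∀ l : ℝ, √(L * (l ^ 2 / (2 * n) + (1 - l) ^ 2 / (2 * N))) + Δ * (1 - l) =
      poolingRadius (L / (2 * n)) (L / (2 * N)) Δ l := fun l => by
    rw [poolingRadius]; ring_nf
  simp only [hε]
  have ha : 0 < L / (2 * n) := by positivity
  have hb : 0 < L / (2 * N) := by positivity
  have hstat := optimalWeight_stationary hn' hN' hL (hs.trans' (by positivity))
    (sq_sqrt (hE.trans' (by positivity)).le)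
  obtain ⟨hpos, hlt⟩ := optimalWeight_mem_Ioo hn' hN' hΔ.le hs
  exact ⟨hpos, hlt, fun l _ => poolingRadius_le_of_stationary ha hb hstat l,
    fun l _ => eq_of_poolingRadius_eq_of_stationary ha hb hstat, poolingRadius_one _ _ _,
    poolingRadius_lt_of_stationary ha hb hstat hlt.ne'⟩
end

section
/- Fix n ≥ 1, N ≥ 1, Δ > 0, L = log(2HSAT/δ) > 0, and suppose n < L/(2Δ²). Define ε(λ) = sqrt(L(λ²/(2n) + (1−λ)²/(2N))) + Δ(1−λ). Then the derivative of ε at λ = 1 is strictly positive: ε'(1) = sqrt(L/(2n)) − Δ > 0, and consequently min_{λ∈[0,1]} ε(λ) < ε(1) = sqrt(L/(2n)); i.e., the data-pooling confidence radius is strictly smaller than the Hoeffding radius ε_R^H(n) = sqrt(L/(2n)). -/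
/-!
At `λ = 1` the pooling term `(1 - λ)² / (2N)` vanishes to second order, so
`ε'(1) = √(L / (2n)) - Δ`, which is positive exactly when `n < L / (2Δ²)`. A function with
positive derivative at `1` takes smaller values just to the left of `1`.
-/

open Filter Set Topology

theorem HasDerivAt.exists_lt_left_of_pos {f : ℝ → ℝ} {f' x a : ℝ} (hf : HasDerivAt f f' x)
    (hf' : 0 < f') (ha : a < x) : ∃ l ∈ Ioo a x, f l < f x := by
  have hslope : Tendsto (slope f x) (𝓝[<] x) (𝓝 f') :=
    (hasDerivAt_iff_tendsto_slope.1 hf).mono_left (nhdsWithin_mono _ fun _ h => ne_of_lt h)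
  obtain ⟨l, hpos, hl⟩ :=
    ((hslope.eventually (eventually_gt_nhds hf')).and (Ioo_mem_nhdsLT ha)).exists
  refine ⟨l, hl, ?_⟩
  rw [slope_def_field] at hpos
  rcases div_pos_iff.1 hpos with h | h
  · linarith [h.2, hl.2]
  · linarith [h.1]

theorem hasDerivAt_sqrt_mul_sq_add_mul_one_sub_sq {a : ℝ} (ha : 0 < a) (b : ℝ) :
    HasDerivAt (fun l => √(a * l ^ 2 + b * (1 - l) ^ 2)) √a 1 := by
  have hq : HasDerivAt (fun l : ℝ => a * l ^ 2 + b * (1 - l) ^ 2) (2 * a) 1 := by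
    have h := ((hasDerivAt_pow 2 (1 : ℝ)).const_mul a).fun_add
      ((((hasDerivAt_id' (1 : ℝ)).const_sub 1).fun_pow 2).const_mul b)
    exact h.congr_deriv (by norm_num [mul_comm])
  convert hq.sqrt (by simp [ha.ne']) using 1
  norm_num
  field_simp
  exact Real.sq_sqrt ha.le

theorem lt_sqrt_div_of_lt_div {n Δ L : ℝ} (hn : 0 < n) (hΔ : 0 < Δ)
    (h : n < L / (2 * Δ ^ 2)) : Δ < √(L / (2 * n)) := by
  rw [Real.lt_sqrt hΔ.le, lt_div_iff₀ (by positivity)]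
  rw [lt_div_iff₀ (by positivity)] at h
  linarith

theorem stmt_9_general (n N : ℕ) (hn : 1 ≤ n) (Δ L : ℝ) (hΔ : 0 < Δ) (hL : 0 < L)
    (hsmall : (n : ℝ) < L / (2 * Δ ^ 2)) :
    letI ε : ℝ → ℝ := fun l =>
      Real.sqrt (L * (l ^ 2 / (2 * n) + (1 - l) ^ 2 / (2 * N))) + Δ * (1 - l)
    HasDerivAt ε (Real.sqrt (L / (2 * n)) - Δ) 1 ∧
    0 < Real.sqrt (L / (2 * n)) - Δ ∧
    ε 1 = Real.sqrt (L / (2 * n)) ∧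
    (∃ l ∈ Set.Icc (0 : ℝ) 1, ε l < ε 1) := by
  set ε : ℝ → ℝ := fun l =>
    √(L * (l ^ 2 / (2 * n) + (1 - l) ^ 2 / (2 * N))) + Δ * (1 - l) with hεdef
  have hn0 : (0 : ℝ) < n := by exact_mod_cast hn
  have hε : ε = fun l => √(L / (2 * n) * l ^ 2 + L / (2 * N) * (1 - l) ^ 2) + Δ * (1 - l) := by
    funext l
    simp only [hεdef]
    congr 2
    ring
  have hderiv : HasDerivAt ε (√(L / (2 * n)) - Δ) 1 := by
    rw [hε]
    exact ((hasDerivAt_sqrt_mul_sq_add_mul_one_sub_sq (by positivity) _).fun_add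
      (((hasDerivAt_id' (1 : ℝ)).const_sub 1).const_mul Δ)).congr_deriv (by ring)
  have hgap : 0 < √(L / (2 * n)) - Δ := sub_pos.2 (lt_sqrt_div_of_lt_div hn0 hΔ hsmall)
  have hε1 : ε 1 = √(L / (2 * n)) := by simp [hε]
  obtain ⟨l, hl, hlt⟩ := hderiv.exists_lt_left_of_pos hgap zero_lt_one
  exact ⟨hderiv, hgap, hε1, l, Ioo_subset_Icc_self hl, hlt⟩

/-- When `n < L/(2Δ²)`, the derivative of the data-pooling radius
`ε(λ) = sqrt(L(λ²/(2n)+(1−λ)²/(2N))) + Δ(1−λ)` at `λ = 1` is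
`sqrt(L/(2n)) − Δ > 0`; consequently the minimum of `ε` over `[0,1]` is
strictly smaller than `ε(1) = sqrt(L/(2n))` (the Hoeffding radius). -/
theorem stmt_9 (n N : ℕ) (hn : 1 ≤ n) (hN : 1 ≤ N) (Δ L : ℝ) (hΔ : 0 < Δ) (hL : 0 < L)
    (hsmall : (n : ℝ) < L / (2 * Δ ^ 2)) :
    letI ε : ℝ → ℝ := fun l =>
      Real.sqrt (L * (l ^ 2 / (2 * n) + (1 - l) ^ 2 / (2 * N))) + Δ * (1 - l)
    HasDerivAt ε (Real.sqrt (L / (2 * n)) - Δ) 1 ∧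
    0 < Real.sqrt (L / (2 * n)) - Δ ∧
    ε 1 = Real.sqrt (L / (2 * n)) ∧
    (∃ l ∈ Set.Icc (0 : ℝ) 1, ε l < ε 1) :=
  stmt_9_general n N hn Δ L hΔ hL hsmall
end

section
/- Fix n ≥ 1, N ≥ 1, S ≥ 1, Δ > 0 and L = log(2HSAT/δ) > 0. Let λ* minimize ε_R(λ) = sqrt(L(λ²/(2n) + (1−λ)²/(2N))) + (1−λ)Δ on [0,1], and let ε_P^{DP} = sqrt(2(S log 2 + L)((λ*)²/n + (1−λ*)²/N)) + (1−λ*)Δ. Then ε_P^{DP} ≤ sqrt(4(S log 2 + L)/L) · ε_R(λ*), and since sqrt(4(S log 2 + L)/L) · sqrt(L/(2n)) = sqrt(2(S log 2 + L)/n) = ε_P^H(n), it follows that ε_P^{DP} ≤ ε_P^H(n), with strict inequality when n < L/(2Δ²). -/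
set_option maxHeartbeats 1000000 in
/-- The data-pooling transition radius at the reward-optimal weight `λ*` satisfies
`ε_P^{DP} ≤ sqrt(4(S log 2 + L)/L)·ε_R(λ*) ≤ ε_P^H(n) = sqrt(2(S log 2 + L)/n)`,
strictly when `n < L/(2Δ²)`. -/
theorem stmt_15 (n N S : ℕ) (hn : 1 ≤ n) (hN : 1 ≤ N) (hS : 1 ≤ S)
    (Δ L : ℝ) (hΔ : 0 < Δ) (hL : 0 < L)
    (lstar : ℝ) (hl : lstar ∈ Set.Icc (0 : ℝ) 1)
    (hmin : IsMinOn
      (fun l => Real.sqrt (L * (l ^ 2 / (2 * n) + (1 - l) ^ 2 / (2 * N))) + (1 - l) * Δ)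
      (Set.Icc (0 : ℝ) 1) lstar) :
    letI εR : ℝ → ℝ := fun l =>
      Real.sqrt (L * (l ^ 2 / (2 * n) + (1 - l) ^ 2 / (2 * N))) + (1 - l) * Δ
    letI εPDP : ℝ := Real.sqrt (2 * ((S : ℝ) * Real.log 2 + L) *
      (lstar ^ 2 / n + (1 - lstar) ^ 2 / N)) + (1 - lstar) * Δ
    εPDP ≤ Real.sqrt (4 * ((S : ℝ) * Real.log 2 + L) / L) * εR lstar ∧
    Real.sqrt (4 * ((S : ℝ) * Real.log 2 + L) / L) * Real.sqrt (L / (2 * n)) =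
      Real.sqrt (2 * ((S : ℝ) * Real.log 2 + L) / n) ∧
    εPDP ≤ Real.sqrt (2 * ((S : ℝ) * Real.log 2 + L) / n) ∧
    ((n : ℝ) < L / (2 * Δ ^ 2) →
      εPDP < Real.sqrt (2 * ((S : ℝ) * Real.log 2 + L) / n)) := by
  have hn' : (0:ℝ) < n := by exact_mod_cast hn
  have hN' : (0:ℝ) < N := by exact_mod_cast hN
  obtain ⟨hl0, hl1⟩ := hl
  have hlog : (0:ℝ) ≤ (S:ℝ) * Real.log 2 :=
    mul_nonneg (Nat.cast_nonneg S) (Real.log_nonneg one_le_two)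
  set K : ℝ := (S:ℝ) * Real.log 2 + L with hKdef
  have hK : 0 < K := by rw [hKdef]; linarith
  have hLK : L ≤ K := by rw [hKdef]; linarith
  clear_value K
  have key : Real.sqrt (2*K*(lstar^2/(n:ℝ) + (1-lstar)^2/(N:ℝ)))
      = Real.sqrt (4*K/L) * Real.sqrt (L*(lstar^2/(2*(n:ℝ))+(1-lstar)^2/(2*(N:ℝ)))) := by
    rw [← Real.sqrt_mul (by positivity)]
    congr 1
    field_simp
    ring
  have hC1 : 1 ≤ Real.sqrt (4*K/L) := by
    rw [show (1:ℝ) = Real.sqrt 1 by simp]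
    apply Real.sqrt_le_sqrt
    rw [le_div_iff₀ hL]
    linarith
  have hC0 : (0:ℝ) ≤ Real.sqrt (4*K/L) := Real.sqrt_nonneg _
  -- part 2
  have h2 : Real.sqrt (4*K/L) * Real.sqrt (L/(2*(n:ℝ))) = Real.sqrt (2*K/(n:ℝ)) := by
    rw [← Real.sqrt_mul (by positivity)]
    congr 1
    field_simp
    ring
  -- part 1
  have h1 : Real.sqrt (2*K*(lstar^2/(n:ℝ) + (1-lstar)^2/(N:ℝ))) + (1-lstar)*Δ
      ≤ Real.sqrt (4*K/L) *
        (Real.sqrt (L*(lstar^2/(2*(n:ℝ))+(1-lstar)^2/(2*(N:ℝ)))) + (1-lstar)*Δ) := by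
    rw [key, mul_add]
    have hq : (1-lstar)*Δ ≤ Real.sqrt (4*K/L) * ((1-lstar)*Δ) := by
      nlinarith [mul_nonneg (sub_nonneg.mpr hl1) hΔ.le]
    linarith [mul_nonneg (sub_nonneg.mpr hl1) hΔ.le]
  -- εR lstar ≤ εR 1 = sqrt(L/(2n))
  have hmin1 : Real.sqrt (L*(lstar^2/(2*(n:ℝ))+(1-lstar)^2/(2*(N:ℝ)))) + (1-lstar)*Δ
      ≤ Real.sqrt (L/(2*(n:ℝ))) := by
    have h0 : Real.sqrt (L*(lstar^2/(2*(n:ℝ))+(1-lstar)^2/(2*(N:ℝ)))) + (1-lstar)*Δ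
        ≤ Real.sqrt (L*((1:ℝ)^2/(2*(n:ℝ))+((1:ℝ)-1)^2/(2*(N:ℝ)))) + ((1:ℝ)-1)*Δ :=
      isMinOn_iff.mp hmin 1 ⟨zero_le_one, le_refl 1⟩
    have e : L * ((1:ℝ)^2/(2*(n:ℝ)) + ((1:ℝ)-1)^2/(2*(N:ℝ))) = L/(2*(n:ℝ)) := by
      ring
    rw [e] at h0
    linarith
  -- strict part
  have hstrict : (n:ℝ) < L / (2 * Δ ^ 2) →
      Real.sqrt (L*(lstar^2/(2*(n:ℝ))+(1-lstar)^2/(2*(N:ℝ)))) + (1-lstar)*Δ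
      < Real.sqrt (L/(2*(n:ℝ))) := by
    intro hns
    obtain ⟨a, hadef, ha0, ha2⟩ : ∃ a : ℝ, a = Real.sqrt (L/(2*(n:ℝ))) ∧ 0 < a ∧
        a^2 = L/(2*(n:ℝ)) :=
      ⟨_, rfl, Real.sqrt_pos.mpr (by positivity), Real.sq_sqrt (by positivity)⟩
    rw [← hadef]
    have hΔa : Δ < a := by
      have hsq : Δ^2 < a^2 := by
        rw [ha2, lt_div_iff₀ (by positivity)]
        have := (lt_div_iff₀ (by positivity : (0:ℝ) < 2*Δ^2)).mp hns
        nlinarith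
      nlinarith
    have haΔ : 0 < a - Δ := sub_pos.mpr hΔa
    obtain ⟨t, ht0, ht12, htb⟩ : ∃ t : ℝ, 0 < t ∧ t ≤ 1/2 ∧ t ≤ (a-Δ)*(N:ℝ)*a/L :=
      ⟨min (1/2) ((a-Δ)*(N:ℝ)*a/L),
        lt_min (by norm_num) (div_pos (mul_pos (mul_pos haΔ hN') ha0) hL),
        min_le_left _ _, min_le_right _ _⟩
    have hmem : (1-t) ∈ Set.Icc (0:ℝ) 1 := ⟨by linarith, by linarith⟩
    have h4 : Real.sqrt (L*(lstar^2/(2*(n:ℝ))+(1-lstar)^2/(2*(N:ℝ)))) + (1-lstar)*Δ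
        ≤ Real.sqrt (L*((1-t)^2/(2*(n:ℝ))+(1-(1-t))^2/(2*(N:ℝ)))) + (1-(1-t))*Δ :=
      isMinOn_iff.mp hmin (1-t) hmem
    have e4 : (1:ℝ) - (1-t) = t := by ring
    rw [e4] at h4
    -- bound sqrt term at 1-t
    have hBnn : (0:ℝ) ≤ (1-t)*a + L*t^2/(2*(N:ℝ)*a) :=
      add_nonneg (mul_nonneg (by linarith) ha0.le) (by positivity)
    have hB : Real.sqrt (L*((1-t)^2/(2*(n:ℝ)) + t^2/(2*(N:ℝ))))
        ≤ (1-t)*a + L*t^2/(2*(N:ℝ)*a) := by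
      rw [show (1-t)*a + L*t^2/(2*(N:ℝ)*a)
          = Real.sqrt (((1-t)*a + L*t^2/(2*(N:ℝ)*a))^2) from (Real.sqrt_sq hBnn).symm]
      apply Real.sqrt_le_sqrt
      have e1 : L*((1-t)^2/(2*(n:ℝ)) + t^2/(2*(N:ℝ)))
          = (L/(2*(n:ℝ)))*(1-t)^2 + (L/(2*(N:ℝ)))*t^2 := by ring
      have e2 : ((1-t)*a + L*t^2/(2*(N:ℝ)*a))^2
          = a^2*(1-t)^2 + (1-t)*(L*t^2/(N:ℝ)) + (L*t^2/(2*(N:ℝ)*a))^2 := by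
        field_simp
        ring
      rw [e1, e2, ← ha2]
      have h12 : (1:ℝ)/2 ≤ 1-t := by linarith
      have hpos : (0:ℝ) ≤ L*t^2/(N:ℝ) := by positivity
      have e3 : L/(2*(N:ℝ))*t^2 = (1/2)*(L*t^2/(N:ℝ)) := by ring
      nlinarith [mul_le_mul_of_nonneg_right h12 hpos, sq_nonneg (L*t^2/(2*(N:ℝ)*a)), e3]
    have hfr : L*t^2/(2*(N:ℝ)*a) ≤ (a-Δ)*t/2 := by
      rw [div_le_iff₀ (by positivity)]
      have := mul_le_mul_of_nonneg_right ((le_div_iff₀ hL).mp htb) ht0.le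
      nlinarith
    have hlt : (1-t)*a + L*t^2/(2*(N:ℝ)*a) + t*Δ < a := by
      nlinarith [mul_pos ht0 haΔ]
    linarith
  -- assemble
  have h3 : Real.sqrt (2*K*(lstar^2/(n:ℝ) + (1-lstar)^2/(N:ℝ))) + (1-lstar)*Δ
      ≤ Real.sqrt (2*K/(n:ℝ)) :=
    h1.trans (by rw [← h2]; exact mul_le_mul_of_nonneg_left hmin1 hC0)
  have h4' : (n:ℝ) < L / (2 * Δ ^ 2) →
      Real.sqrt (2*K*(lstar^2/(n:ℝ) + (1-lstar)^2/(N:ℝ))) + (1-lstar)*Δ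
      < Real.sqrt (2*K/(n:ℝ)) := fun hns =>
    h1.trans_lt (by
      rw [← h2]
      exact mul_lt_mul_of_pos_left (hstrict hns) (lt_of_lt_of_le one_pos hC1))
  exact ⟨h1, h2, h3, h4'⟩
end

section
/- The function λ*(n) = (n + NnΔ/sqrt((N+n)L/2 − Δ²Nn))/(N+n), defined for integers 1 ≤ n < L/(2Δ²) with fixed N ≥ 1, Δ > 0, L > 0, is strictly increasing in n and strictly increasing in Δ (for fixed n in the valid range). -/
/-!
Writing `q = nΔ / √((N+n)L/2 − Δ²Nn)`, the weight is `λ* = (n + Nq)/(N+n) = 1 − N(1 − q)/(N+n)`.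
On the valid range `0 ≤ q < 1`, and `q²` strictly increases both in `n` and in `Δ`: in `Δ` its
numerator grows and its denominator shrinks, in `n` this is the polynomial inequality
`n²·S(n') < n'²·S(n)` for the radicand `S`. Hence `λ*` increases in `Δ` through `q`, and in `n`
because `1 − q` shrinks while staying positive and `N + n` grows.
-/

open Real

noncomputable section

namespace PoolingWeight

/-- The radicand `(N+n)L/2 − Δ²Nn` of `λ*`, with `a = N` and `t = n`. -/
def radicand (a L Δ t : ℝ) : ℝ := (a + t) * L / 2 - Δ ^ 2 * a * t

def ratio (a L Δ t : ℝ) : ℝ := t * Δ / √(radicand a L Δ t)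

def weight (a L Δ t : ℝ) : ℝ := (t + a * t * Δ / √(radicand a L Δ t)) / (a + t)

variable {a L Δ Δ' t t' : ℝ}

theorem radicand_pos (ha : 0 < a) (ht : 0 ≤ t) (hL : 0 ≤ L) (hb : Δ ^ 2 * t < L / 2) :
    0 < radicand a L Δ t := by
  have : radicand a L Δ t = a * (L / 2 - Δ ^ 2 * t) + t * L / 2 := by unfold radicand; ring
  rw [this]
  have := mul_pos ha (sub_pos.2 hb)
  positivity

theorem weight_eq_one_sub (h : a + t ≠ 0) :
    weight a L Δ t = 1 - a * (1 - ratio a L Δ t) / (a + t) := by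
  unfold weight ratio
  field_simp
  ring

theorem ratio_nonneg (ht : 0 ≤ t) (hΔ : 0 ≤ Δ) : 0 ≤ ratio a L Δ t := by
  unfold ratio; positivity

theorem ratio_sq (hS : 0 ≤ radicand a L Δ t) :
    ratio a L Δ t ^ 2 = (t * Δ) ^ 2 / radicand a L Δ t := by
  rw [ratio, div_pow, sq_sqrt hS]

theorem ratio_lt_one (ha : 0 < a) (ht : 0 < t) (hΔ : 0 ≤ Δ) (hb : Δ ^ 2 * t < L / 2) :
    ratio a L Δ t < 1 := by
  have hL : 0 ≤ L := by nlinarith [sq_nonneg Δ]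
  have hS := radicand_pos ha ht.le hL hb
  rw [ratio, div_lt_one (sqrt_pos.2 hS), lt_sqrt (by positivity)]
  unfold radicand
  nlinarith [mul_pos ha (sub_pos.2 hb)]

theorem sq_mul_radicand_lt (ha : 0 < a) (ht : 0 < t) (htt' : t < t') (hL : 0 ≤ L)
    (hb : Δ ^ 2 * t' < L / 2) : t ^ 2 * radicand a L Δ t' < t' ^ 2 * radicand a L Δ t := by
  have hfactor : t' ^ 2 * radicand a L Δ t - t ^ 2 * radicand a L Δ t' =
      (t' - t) * (a * L / 2 * t + t * t' * L / 2 + a * t' * (L / 2 - Δ ^ 2 * t)) := by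
    unfold radicand; ring
  have hb₀ : 0 < L / 2 - Δ ^ 2 * t := by nlinarith
  have hpos : 0 < a * L / 2 * t + t * t' * L / 2 + a * t' * (L / 2 - Δ ^ 2 * t) := by
    nlinarith [mul_pos (mul_pos ha (ht.trans htt')) hb₀, mul_nonneg (mul_pos ha ht).le hL,
      mul_nonneg (mul_pos ht (ht.trans htt')).le hL]
  nlinarith [mul_pos (sub_pos.2 htt') hpos]

theorem ratio_lt_ratio_of_lt (ha : 0 < a) (ht : 0 < t) (htt' : t < t') (hΔ : 0 < Δ)
    (hb : Δ ^ 2 * t' < L / 2) : ratio a L Δ t < ratio a L Δ t' := by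
  have hL : 0 ≤ L := by nlinarith [sq_nonneg Δ]
  have hS := radicand_pos ha ht.le hL (by nlinarith : Δ ^ 2 * t < L / 2)
  have hS' := radicand_pos ha (ht.trans htt').le hL hb
  rw [← pow_lt_pow_iff_left₀ (ratio_nonneg ht.le hΔ.le) (ratio_nonneg (ht.trans htt').le hΔ.le)
    two_ne_zero, ratio_sq hS.le, ratio_sq hS'.le, div_lt_div_iff₀ hS hS', mul_pow, mul_pow]
  have := mul_lt_mul_of_pos_left (sq_mul_radicand_lt ha ht htt' hL hb) (pow_pos hΔ 2)
  linarith

theorem ratio_lt_ratio_of_gap_lt (ha : 0 < a) (ht : 0 < t) (hΔ : 0 < Δ) (hΔΔ' : Δ < Δ')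
    (hb : Δ' ^ 2 * t < L / 2) : ratio a L Δ t < ratio a L Δ' t := by
  have hL : 0 ≤ L := by nlinarith [sq_nonneg Δ']
  have hsq : Δ ^ 2 < Δ' ^ 2 := pow_lt_pow_left₀ hΔΔ' hΔ.le two_ne_zero
  have hS' := radicand_pos ha ht.le hL hb
  have hS := radicand_pos ha ht.le hL (by nlinarith : Δ ^ 2 * t < L / 2)
  have hSS' : radicand a L Δ' t < radicand a L Δ t := by
    unfold radicand; nlinarith [mul_pos ha ht]
  rw [← pow_lt_pow_iff_left₀ (ratio_nonneg ht.le hΔ.le)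
    (ratio_nonneg ht.le (hΔ.trans hΔΔ').le) two_ne_zero, ratio_sq hS.le, ratio_sq hS'.le]
  exact div_lt_div₀ (by rw [mul_pow, mul_pow]; gcongr) hSS'.le (by positivity) hS'

theorem weight_lt_weight_of_lt (ha : 0 < a) (ht : 0 < t) (htt' : t < t') (hΔ : 0 < Δ)
    (hb : Δ ^ 2 * t' < L / 2) : weight a L Δ t < weight a L Δ t' := by
  have hq := ratio_lt_ratio_of_lt ha ht htt' hΔ hb
  have hq' := ratio_lt_one ha (ht.trans htt') hΔ.le hb
  rw [weight_eq_one_sub (add_pos ha ht).ne', weight_eq_one_sub (add_pos ha (ht.trans htt')).ne',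
    sub_lt_sub_iff_left]
  calc a * (1 - ratio a L Δ t') / (a + t') ≤ a * (1 - ratio a L Δ t') / (a + t) := by gcongr
    _ < a * (1 - ratio a L Δ t) / (a + t) := by gcongr

theorem weight_lt_weight_of_gap_lt (ha : 0 < a) (ht : 0 < t) (hΔ : 0 < Δ) (hΔΔ' : Δ < Δ')
    (hb : Δ' ^ 2 * t < L / 2) : weight a L Δ t < weight a L Δ' t := by
  have hq := ratio_lt_ratio_of_gap_lt ha ht hΔ hΔΔ' hb
  rw [weight_eq_one_sub (add_pos ha ht).ne', weight_eq_one_sub (add_pos ha ht).ne',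
    sub_lt_sub_iff_left]
  gcongr

end PoolingWeight

end

theorem stmt_18_general (N : ℕ) (hN : 1 ≤ N) (L : ℝ) :
    letI f : ℕ → ℝ → ℝ := fun n Δ =>
      ((n : ℝ) + (N : ℝ) * n * Δ /
        Real.sqrt (((N : ℝ) + n) * L / 2 - Δ ^ 2 * N * n)) / ((N : ℝ) + n)
    (∀ Δ : ℝ, 0 < Δ → ∀ n n' : ℕ, 1 ≤ n → n < n' →
      (n' : ℝ) < L / (2 * Δ ^ 2) → f n Δ < f n' Δ) ∧
    (∀ n : ℕ, 1 ≤ n → ∀ Δ Δ' : ℝ, 0 < Δ → Δ < Δ' →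
      (n : ℝ) < L / (2 * Δ' ^ 2) → f n Δ < f n Δ') := by
  have hN₀ : (0 : ℝ) < N := by exact_mod_cast hN
  have bound {Δ t : ℝ} (hΔ : 0 < Δ) (h : t < L / (2 * Δ ^ 2)) : Δ ^ 2 * t < L / 2 := by
    rw [lt_div_iff₀ (by positivity)] at h
    linarith
  refine ⟨fun Δ hΔ n n' hn hnn' hb => ?_, fun n hn Δ Δ' hΔ hΔΔ' hb => ?_⟩
  · exact PoolingWeight.weight_lt_weight_of_lt hN₀ (by exact_mod_cast hn)
      (by exact_mod_cast hnn') hΔ (bound hΔ hb)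
  · exact PoolingWeight.weight_lt_weight_of_gap_lt hN₀ (by exact_mod_cast hn) hΔ hΔΔ'
      (bound (hΔ.trans hΔΔ') hb)

/-- Monotonicity of the optimal data-pooling weight
`λ*(n, Δ) = (n + NnΔ/sqrt((N+n)L/2 − Δ²Nn))/(N+n)`: strictly increasing in `n`
and strictly increasing in `Δ`, on the valid range `1 ≤ n < L/(2Δ²)`. -/
theorem stmt_18 (N : ℕ) (hN : 1 ≤ N) (L : ℝ) (hL : 0 < L) :
    letI f : ℕ → ℝ → ℝ := fun n Δ =>
      ((n : ℝ) + (N : ℝ) * n * Δ /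
        Real.sqrt (((N : ℝ) + n) * L / 2 - Δ ^ 2 * N * n)) / ((N : ℝ) + n)
    (∀ Δ : ℝ, 0 < Δ → ∀ n n' : ℕ, 1 ≤ n → n < n' →
      (n' : ℝ) < L / (2 * Δ ^ 2) → f n Δ < f n' Δ) ∧
    (∀ n : ℕ, 1 ≤ n → ∀ Δ Δ' : ℝ, 0 < Δ → Δ < Δ' →
      (n : ℝ) < L / (2 * Δ' ^ 2) → f n Δ < f n Δ') :=
  stmt_18_general N hN L
end
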